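/- arXiv:2509.04493 — 2 statements merged into one kernel-verified Lean document; each statement's English description precedes it below -/
import Mathlib

section
/- For every integer n ≥ 2, the number of compositions of n with all parts in {1, 2} and last part equal to 2 equals the number of compositions of n with all parts at least 2. -/
/-- Encode a list with parts ≥ 2 into a 1/2-list ending in 2. -/
def fmap : List ℕ → List ℕ
  | [] => []
  | k :: t => List.replicate (k - 2) 1 ++ 2 :: fmap t

/-- Decode a 1/2-list ending in 2 back into a list of parts ≥ 2. -/
def gmap : List ℕ → List ℕ
  | [] => []
  | a :: t =>
    if a = 2 then 2 :: gmap t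
    else
      match gmap t with
      | [] => []
      | h :: r => (h + 1) :: r

lemma gmap_cons (a : ℕ) (t : List ℕ) :
    gmap (a :: t) = if a = 2 then 2 :: gmap t else
      match gmap t with
      | [] => []
      | h :: r => (h + 1) :: r := rfl

lemma fmap_sum : ∀ l : List ℕ, (∀ p ∈ l, 2 ≤ p) → (fmap l).sum = l.sum := by
  intro l
  induction l with
  | nil => intro _; rfl
  | cons k t ih =>
    intro h
    have hk : 2 ≤ k := h k (by simp)
    simp [fmap, ih (fun p hp => h p (by simp [hp]))]
    omega

lemma fmap_mem : ∀ l : List ℕ, ∀ p ∈ fmap l, p = 1 ∨ p = 2 := by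
  intro l
  induction l with
  | nil => simp [fmap]
  | cons k t ih =>
    intro p hp
    simp only [fmap, List.mem_append, List.mem_cons] at hp
    rcases hp with h | h | h
    · exact Or.inl (List.eq_of_mem_replicate h)
    · exact Or.inr h
    · exact ih p h

lemma fmap_last : ∀ l : List ℕ, l ≠ [] → (fmap l).getLast? = some 2 := by
  intro l
  induction l with
  | nil => intro h; exact absurd rfl h
  | cons k t ih =>
    intro _
    show (List.replicate (k - 2) 1 ++ 2 :: fmap t).getLast? = some 2
    rcases t with _ | ⟨a, s⟩
    · simp [fmap]
    · have h2 : (2 :: fmap (a :: s)).getLast? = some 2 := by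
        rw [show (2 :: fmap (a :: s)) = [2] ++ fmap (a :: s) from rfl,
          List.getLast?_append, ih (by simp)]
        rfl
      rw [List.getLast?_append, h2]
      rfl

lemma gmap_mem : ∀ l : List ℕ, ∀ p ∈ gmap l, 2 ≤ p := by
  intro l
  induction l with
  | nil => simp [gmap]
  | cons a t ih =>
    intro p hp
    by_cases ha : a = 2
    · rw [gmap_cons, if_pos ha] at hp
      rw [List.mem_cons] at hp
      rcases hp with rfl | hp
      · omega
      · exact ih p hp
    · rw [gmap_cons, if_neg ha] at hp
      rcases hg : gmap t with _ | ⟨h, r⟩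
      · rw [hg] at hp; simp at hp
      · rw [hg] at hp
        rw [List.mem_cons] at hp
        rcases hp with rfl | hp
        · have := ih h (by rw [hg]; simp)
          omega
        · exact ih p (by rw [hg]; simp [hp])

lemma gmap_ne : ∀ l : List ℕ, l.getLast? = some 2 → gmap l ≠ [] := by
  intro l
  induction l with
  | nil => simp
  | cons a t ih =>
    intro hl
    by_cases ha : a = 2
    · rw [gmap_cons, if_pos ha]; simp
    · rcases t with _ | ⟨b, s⟩
      · simp at hl; exact absurd hl ha
      · have hl' : (b :: s).getLast? = some 2 := by
          rwa [List.getLast?_cons_cons] at hl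
        have hne := ih hl'
        rw [gmap_cons, if_neg ha]
        rcases hg : gmap (b :: s) with _ | ⟨h, r⟩
        · exact absurd hg hne
        · simp

lemma gmap_replicate : ∀ (m : ℕ) (s : List ℕ),
    gmap (List.replicate m 1 ++ 2 :: s) = (m + 2) :: gmap s := by
  intro m
  induction m with
  | zero => intro s; simp [gmap]
  | succ m ih =>
    intro s
    rw [List.replicate_succ, List.cons_append, gmap_cons,
      if_neg (by norm_num : (1:ℕ) ≠ 2), ih]

lemma gf : ∀ l : List ℕ, (∀ p ∈ l, 2 ≤ p) → gmap (fmap l) = l := by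
  intro l
  induction l with
  | nil => intro _; rfl
  | cons k t ih =>
    intro h
    have hk : 2 ≤ k := h k (by simp)
    show gmap (List.replicate (k - 2) 1 ++ 2 :: fmap t) = k :: t
    rw [gmap_replicate, ih (fun p hp => h p (by simp [hp]))]
    congr 1
    omega

lemma fg : ∀ l : List ℕ, (∀ p ∈ l, p = 1 ∨ p = 2) → l.getLast? = some 2 →
    fmap (gmap l) = l := by
  intro l
  induction l with
  | nil => simp
  | cons a t ih =>
    intro hmem hl
    by_cases ha : a = 2
    · subst ha
      rcases t with _ | ⟨b, s⟩
      · simp [gmap, fmap]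
      · have hl' : (b :: s).getLast? = some 2 := by
          rwa [List.getLast?_cons_cons] at hl
        have hrec := ih (fun p hp => hmem p (by simp [hp])) hl'
        rw [gmap_cons, if_pos rfl]
        show List.replicate (2 - 2) 1 ++ 2 :: fmap (gmap (b :: s)) = 2 :: b :: s
        rw [hrec]; rfl
    · have ha1 : a = 1 := by
        rcases hmem a (by simp) with h | h
        · exact h
        · exact absurd h ha
      rcases t with _ | ⟨b, s⟩
      · simp [ha1] at hl
      · have hl' : (b :: s).getLast? = some 2 := by
          rwa [List.getLast?_cons_cons] at hl
        have hfg := ih (fun p hp => hmem p (by simp [hp])) hl'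
        have hne := gmap_ne _ hl'
        rcases hg : gmap (b :: s) with _ | ⟨h, r⟩
        · exact absurd hg hne
        · have hh : 2 ≤ h := gmap_mem _ h (by rw [hg]; simp)
          rw [gmap_cons, if_neg ha, hg]
          show fmap ((h + 1) :: r) = a :: b :: s
          show List.replicate (h + 1 - 2) 1 ++ 2 :: fmap r = a :: b :: s
          have he : h + 1 - 2 = (h - 2) + 1 := by omega
          rw [he, List.replicate_succ]
          have hbs : fmap (h :: r) = b :: s := by rw [← hg, hfg]
          simp only [List.cons_append]
          rw [show List.replicate (h-2) 1 ++ 2 :: fmap r = fmap (h :: r) from rfl, hbs, ha1]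

/-- For n ≥ 2, the number of compositions of n with all parts in {1,2}
and last part equal to 2 equals the number of compositions of n with all parts at least 2. -/
theorem card_compositions_one_two_last_two (n : ℕ) (hn : 2 ≤ n) :
    Nat.card {c : Composition n //
        (∀ p ∈ c.blocks, p = 1 ∨ p = 2) ∧ c.blocks.getLast? = some 2} =
      Nat.card {c : Composition n // ∀ p ∈ c.blocks, 2 ≤ p} := by
  apply Nat.card_congr
  refine
    { toFun := fun c => ⟨⟨gmap c.1.blocks,
        fun {p} hp => by have := gmap_mem _ p hp; omega,
        by
          have h1 := c.2.1
          have h2 := c.2.2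
          have hfg := fg c.1.blocks h1 h2
          calc (gmap c.1.blocks).sum = (fmap (gmap c.1.blocks)).sum :=
                (fmap_sum _ (gmap_mem _)).symm
            _ = c.1.blocks.sum := by rw [hfg]
            _ = n := c.1.blocks_sum⟩,
        fun p hp => gmap_mem _ p hp⟩
      invFun := fun c => ⟨⟨fmap c.1.blocks,
        fun {p} hp => by rcases fmap_mem _ p hp with h | h <;> omega,
        by rw [fmap_sum _ c.2]; exact c.1.blocks_sum⟩,
        fmap_mem _,
        by
          apply fmap_last
          intro h
          have hs := c.1.blocks_sum
          rw [h] at hs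
          simp at hs
          omega⟩
      left_inv := ?_
      right_inv := ?_ }
  · rintro ⟨c, h1, h2⟩
    apply Subtype.ext
    apply Composition.ext
    exact fg c.blocks h1 h2
  · rintro ⟨c, h⟩
    apply Subtype.ext
    apply Composition.ext
    exact gf c.blocks h
end

section
/- For every integer n ≥ 2, the number of compositions of n all of whose parts are odd equals the number of compositions of n+1 all of whose parts are at least 2. -/
/-!
A list of parts from the progression `a, a + d, a + 2d, …` summing to `n` either starts with `a`,
which can be removed, or with a larger part, which can be lowered by `d`. Hence the number `N n`
of such lists satisfies `N n = N (n - a) + N (n - d)` for `n ≥ a`, `n > d`. For odd parts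
(`a = 1, d = 2`) and for parts at least `2` (`a = 2, d = 1`) this is the Fibonacci recursion, and
the initial values show that both the compositions of `n` into odd parts and those of `n + 1` into
parts `≥ 2` are counted by `fib n`.
-/

def APList (a d n : ℕ) : Type := {l : List ℕ // l.sum = n ∧ ∀ p ∈ l, ∃ j, p = a + d * j}

namespace APList

variable {a d m k n : ℕ}

theorem exists_eq_add_of_ne {x : ℕ} (hx : ∃ j, x = a + d * j) (hxa : x ≠ a) :
    ∃ y, (∃ j, y = a + d * j) ∧ x = y + d := by
  obtain ⟨_ | j, rfl⟩ := hx
  · simp at hxa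
  · exact ⟨a + d * j, ⟨j, rfl⟩, by ring⟩

theorem ne_nil (l : APList a d n) (hn : 0 < n) : l.1 ≠ [] := fun h => by
  simp [← l.2.1, h] at hn

theorem head!_add_sum_tail (l : APList a d n) (hn : 0 < n) : l.1.head! + l.1.tail.sum = n := by
  rw [← List.sum_cons, List.cons_head!_tail (l.ne_nil hn), l.2.1]

theorem exists_head!_eq (l : APList a d n) (hn : 0 < n) : ∃ j, l.1.head! = a + d * j :=
  l.2.2 _ (List.head!_mem_self (l.ne_nil hn))

theorem exists_eq_of_mem_tail (l : APList a d n) {p : ℕ} (hp : p ∈ l.1.tail) :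
    ∃ j, p = a + d * j :=
  l.2.2 p (List.mem_of_mem_tail hp)

def dropHead (hm : m + a = n) (hk : k + d = n) (hk0 : 0 < k) (l : APList a d n) :
    APList a d m ⊕ APList a d k :=
  have hs := l.head!_add_sum_tail (by omega)
  if hxa : l.1.head! = a then
    .inl ⟨l.1.tail, by omega, fun _ => l.exists_eq_of_mem_tail⟩
  else
    have hx := exists_eq_add_of_ne (l.exists_head!_eq (by omega)) hxa
    .inr ⟨(l.1.head! - d) :: l.1.tail,
      by obtain ⟨y, -, hxy⟩ := hx; rw [List.sum_cons]; omega,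
      List.forall_mem_cons.2
        ⟨by obtain ⟨y, hy, hxy⟩ := hx; rwa [hxy, Nat.add_sub_cancel],
          fun _ => l.exists_eq_of_mem_tail⟩⟩

def consHead (hm : m + a = n) (hk : k + d = n) (hk0 : 0 < k) :
    APList a d m ⊕ APList a d k → APList a d n
  | .inl t => ⟨a :: t.1, by rw [List.sum_cons, t.2.1]; omega,
      List.forall_mem_cons.2 ⟨⟨0, by simp⟩, t.2.2⟩⟩
  | .inr t =>
    have hs := t.head!_add_sum_tail hk0
    ⟨(t.1.head! + d) :: t.1.tail, by rw [List.sum_cons]; omega,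
      List.forall_mem_cons.2
        ⟨by obtain ⟨j, hj⟩ := t.exists_head!_eq hk0; exact ⟨j + 1, by rw [hj]; ring⟩,
          fun _ => t.exists_eq_of_mem_tail⟩⟩

def splitHead (hd : 0 < d) (hm : m + a = n) (hk : k + d = n) (hk0 : 0 < k) :
    APList a d n ≃ APList a d m ⊕ APList a d k where
  toFun := dropHead hm hk hk0
  invFun := consHead hm hk hk0
  left_inv := by
    rintro ⟨_ | ⟨x, t⟩, hs, hp⟩
    · simp at hs; omega
    · by_cases hxa : x = a
      · subst hxa; simp [dropHead, consHead]; rfl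
      · obtain ⟨y, -, rfl⟩ := exists_eq_add_of_ne (hp x (.head _)) hxa
        simp [dropHead, consHead, hxa]; rfl
  right_inv := by
    rintro (⟨t, hs, hp⟩ | ⟨_ | ⟨y, t⟩, hs, hp⟩)
    · simp [dropHead, consHead]
    · simp at hs; omega
    · obtain ⟨j, rfl⟩ := hp _ (.head _)
      simp [dropHead, consHead, show a + d * j + d ≠ a by omega]

def compositionEquiv {P : ℕ → Prop} (ha : 0 < a) (hP : ∀ p, P p ↔ ∃ j, p = a + d * j) :
    {c : Composition n // ∀ p ∈ c.blocks, P p} ≃ APList a d n where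
  toFun c := ⟨c.1.blocks, c.1.blocks_sum, fun p hp => (hP p).1 (c.2 p hp)⟩
  invFun l := ⟨⟨l.1, fun hp => by obtain ⟨j, rfl⟩ := l.2.2 _ hp; omega, l.2.1⟩,
    fun p hp => (hP p).2 (l.2.2 p hp)⟩
  left_inv _ := rfl
  right_inv _ := rfl

theorem finite (ha : 0 < a) : Finite (APList a d n) :=
  .of_equiv _ (compositionEquiv (P := fun p => ∃ j, p = a + d * j) ha fun _ => .rfl)

theorem card_eq_card_add_card (ha : 0 < a) (hd : 0 < d) (hm : m + a = n) (hk : k + d = n)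
    (hk0 : 0 < k) :
    Nat.card (APList a d n) = Nat.card (APList a d m) + Nat.card (APList a d k) := by
  have : Finite (APList a d m) := finite ha
  have : Finite (APList a d k) := finite ha
  rw [Nat.card_congr (splitHead hd hm hk hk0), Nat.card_sum]

theorem eq_replicate_of_lt (hn : n < a + d) (l : APList a d n) :
    l.1 = List.replicate l.1.length a := by
  refine List.eq_replicate_iff.2 ⟨rfl, fun p hp => ?_⟩
  have hpn : p ≤ n := l.2.1 ▸ List.le_sum_of_mem hp
  obtain ⟨_ | j, rfl⟩ := l.2.2 p hp
  · simp
  · rw [mul_add_one] at hpn; omega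

theorem card_of_lt (ha : 0 < a) (hn : n < a + d) :
    Nat.card (APList a d n) = if a ∣ n then 1 else 0 := by
  have hlen (l : APList a d n) : l.1.length * a = n := by
    rw [← smul_eq_mul, ← List.sum_replicate, ← eq_replicate_of_lt hn, l.2.1]
  split_ifs with hdvd
  · obtain ⟨j, rfl⟩ := hdvd
    refine Nat.card_eq_one_iff_unique.2
      ⟨⟨fun l l' => Subtype.ext ?_⟩, ⟨⟨List.replicate j a, ?_⟩⟩⟩
    · rw [eq_replicate_of_lt hn l, eq_replicate_of_lt hn l',
        Nat.eq_of_mul_eq_mul_right ha ((hlen l).trans (hlen l').symm)]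
    · simp [mul_comm]
  · exact @Nat.card_of_isEmpty _ ⟨fun l => hdvd ⟨_, (hlen l).symm.trans (mul_comm _ _)⟩⟩

theorem card_one_two_eq_fib : ∀ n, Nat.card (APList 1 2 (n + 1)) = Nat.fib (n + 1)
  | 0 => by rw [card_of_lt] <;> simp
  | 1 => by rw [card_of_lt] <;> simp
  | n + 2 => by
    rw [card_eq_card_add_card (n := n + 2 + 1) (m := n + 2) (k := n + 1) one_pos two_pos rfl rfl
        (by omega),
      card_one_two_eq_fib (n + 1), card_one_two_eq_fib n, add_comm]
    exact Nat.fib_add_two.symm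

theorem card_two_one_eq_fib : ∀ n, Nat.card (APList 2 1 (n + 1)) = Nat.fib n
  | 0 => by rw [card_of_lt] <;> simp
  | 1 => by rw [card_of_lt] <;> simp
  | n + 2 => by
    rw [card_eq_card_add_card (n := n + 2 + 1) (m := n + 1) (k := n + 2) two_pos one_pos rfl rfl
        (by omega),
      card_two_one_eq_fib n, card_two_one_eq_fib (n + 1), Nat.fib_add_two]

end APList

theorem Composition.card_odd_blocks_eq_fib (n : ℕ) :
    Nat.card {c : Composition (n + 1) // ∀ p ∈ c.blocks, Odd p} = Nat.fib (n + 1) := by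
  rw [Nat.card_congr (APList.compositionEquiv one_pos fun p => ?_), APList.card_one_two_eq_fib]
  exact ⟨fun ⟨k, hk⟩ => ⟨k, by omega⟩, fun ⟨k, hk⟩ => ⟨k, by omega⟩⟩

theorem Composition.card_two_le_blocks_eq_fib (n : ℕ) :
    Nat.card {c : Composition (n + 1) // ∀ p ∈ c.blocks, 2 ≤ p} = Nat.fib n := by
  rw [Nat.card_congr (APList.compositionEquiv two_pos fun p => ?_), APList.card_two_one_eq_fib]
  exact ⟨fun hp => ⟨p - 2, by omega⟩, fun ⟨k, hk⟩ => by omega⟩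

/-- For n ≥ 2, the number of compositions of n with all parts odd
equals the number of compositions of n+1 with all parts at least 2. -/
theorem card_odd_eq_card_ge_two_succ (n : ℕ) (hn : 2 ≤ n) :
    Nat.card {c : Composition n // ∀ p ∈ c.blocks, Odd p} =
      Nat.card {c : Composition (n + 1) // ∀ p ∈ c.blocks, 2 ≤ p} := by
  obtain ⟨m, rfl⟩ : ∃ m, n = m + 1 := ⟨n - 1, by omega⟩
  rw [Composition.card_odd_blocks_eq_fib, Composition.card_two_le_blocks_eq_fib]
end
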